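/- arXiv:1207.0287 — 2 statements merged into one kernel-verified Lean document; each statement's English description precedes it below -/
import Mathlib

section
/- Let p and q be odd prime numbers with q = p + 2 and p ≡ 5 (mod 8). Let L be a field equipped with a ℚ_q-algebra structure and let α ∈ L satisfy α² = -2. Then there exist z, w ∈ L with w² + 1 + (p+q)z² + z⁴ = 0. -/
/-!
Since `q ≡ 7 (mod 8)`, `2` is a square modulo `q`, hence a square in `ℚ_q` by Hensel's lemma.
Then `w = α / √2` satisfies `w² = -1`, and `(z, w) = (0, w)` is a point.
-/

namespace PadicInt

variable {p : ℕ} [Fact p.Prime]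

theorem norm_lt_one_iff_toZMod_eq_zero (x : ℤ_[p]) : ‖x‖ < 1 ↔ toZMod x = 0 := by
  rw [← RingHom.mem_ker, ker_toZMod, IsLocalRing.mem_maximalIdeal, mem_nonunits]

theorem norm_eq_one_iff_toZMod_ne_zero (x : ℤ_[p]) : ‖x‖ = 1 ↔ toZMod x ≠ 0 := by
  rw [Ne, ← norm_lt_one_iff_toZMod_eq_zero, not_lt]
  exact ⟨ge_of_eq, x.norm_le_one.antisymm⟩

theorem isSquare_of_isSquare_toZMod (hp : p ≠ 2) {x : ℤ_[p]} (hx : IsSquare (toZMod x))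
    (hx0 : toZMod x ≠ 0) : IsSquare x := by
  obtain ⟨b, hb⟩ := hx
  obtain ⟨a, rfl⟩ := ZMod.ringHom_surjective (toZMod (p := p)) b
  have h2 : (2 : ZMod p) ≠ 0 := Ring.two_ne_zero (by rwa [ZMod.ringChar_zmod_n])
  set F : Polynomial ℤ_[p] := Polynomial.X ^ 2 - Polynomial.C x
  have hroot : ‖F.aeval a‖ < 1 := by
    rw [norm_lt_one_iff_toZMod_eq_zero]
    simp [F, hb, sq]
  have hderiv : ‖F.derivative.aeval a‖ = 1 := by
    rw [norm_eq_one_iff_toZMod_ne_zero]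
    have ha0 : toZMod a ≠ 0 := fun h => hx0 (by simp [hb, h])
    simp only [F, Polynomial.derivative_sub, Polynomial.derivative_X_pow, Polynomial.derivative_C,
      sub_zero, map_mul, Polynomial.aeval_C, Polynomial.aeval_X_pow]
    simpa [map_ofNat] using mul_ne_zero h2 ha0
  obtain ⟨z, hz, -⟩ := hensels_lemma (F := F) (a := a) (by rwa [hderiv, one_pow])
  exact ⟨z, by simpa [F, sub_eq_zero, sq, eq_comm] using hz⟩

end PadicInt

theorem Padic.isSquare_two_of_mod_eight {q : ℕ} [Fact q.Prime] (hq : q % 8 = 1 ∨ q % 8 = 7) :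
    IsSquare (2 : ℚ_[q]) := by
  have hq2 : q ≠ 2 := by omega
  have h2 : IsSquare (2 : ℤ_[q]) := PadicInt.isSquare_of_isSquare_toZMod hq2
    (by rw [map_ofNat]; exact (ZMod.exists_sq_eq_two_iff hq2).2 hq)
    (by rw [map_ofNat]; exact Ring.two_ne_zero (by rwa [ZMod.ringChar_zmod_n]))
  simpa [map_ofNat] using h2.map (PadicInt.Coe.ringHom (p := q))

theorem isSquare_neg_one_of_isSquare_of_isSquare_neg {F : Type*} [Field F] {a : F}
    (ha : IsSquare a) (hna : IsSquare (-a)) (ha0 : a ≠ 0) : IsSquare (-1 : F) := by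
  simpa [neg_div, div_self ha0] using hna.div ha

theorem stmt_12_general (p q : ℕ) [Fact q.Prime]
    (hpq : q = p + 2) (hp5 : p % 8 = 5)
    (L : Type*) [Field L] [Algebra ℚ_[q] L] (α : L) (hα : α ^ 2 = -2) :
    ∃ z w : L, w ^ 2 + 1 + ((p : L) + (q : L)) * z ^ 2 + z ^ 4 = 0 := by
  have h2 : IsSquare (2 : L) := by
    have h2q : IsSquare (2 : ℚ_[q]) := Padic.isSquare_two_of_mod_eight (by omega)
    simpa [map_ofNat] using h2q.map (algebraMap ℚ_[q] L)
  have hn2 : IsSquare (-2 : L) := ⟨α, by rw [← hα, sq]⟩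
  have h20 : (2 : L) ≠ 0 := by
    rw [← map_ofNat (algebraMap ℚ_[q] L) 2, map_ne_zero]
    exact two_ne_zero
  obtain ⟨w, hw⟩ := isSquare_neg_one_of_isSquare_of_isSquare_neg h2 hn2 h20
  exact ⟨0, w, by rw [sq, ← hw]; ring⟩

/-- Let `p` and `q` be odd primes with `q = p + 2` and `p ≡ 5 (mod 8)`. Let `L` be a field
which is a `ℚ_q`-algebra and `α ∈ L` with `α² = -2`. Then there exist `z, w ∈ L` with
`w² + 1 + (p+q)z² + z⁴ = 0`. -/
theorem stmt_12 (p q : ℕ) (hp : p.Prime) [Fact q.Prime] (hpo : Odd p) (hqo : Odd q)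
    (hpq : q = p + 2) (hp5 : p % 8 = 5)
    (L : Type*) [Field L] [Algebra ℚ_[q] L] (α : L) (hα : α ^ 2 = -2) :
    ∃ z w : L, w ^ 2 + 1 + ((p : L) + (q : L)) * z ^ 2 + z ^ 4 = 0 :=
  stmt_12_general p q hpq hp5 L α hα
end

section
/- Let p and q be prime numbers with q = p + 2 and p ≡ 1 (mod 4). Let L be a field equipped with a ℚ₂-algebra structure such that L has dimension 2 as a ℚ₂-vector space, and let α ∈ L satisfy α² = -1. Then there are no z, w ∈ L with -α·w² - 1 - (p+q)·α·z² + pq·z⁴ = 0. -/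
/-!
Identify `L` with `ℚ₂(i) = ℚ₂[ω]`, `ω² = -1`, and homogenise the quartic to
`-ω w² - x⁴ - (p+q) ω x² z² + pq z⁴`. Integrality in `ℚ₂(i)` is detected by the norm
`x² + y²`, since `‖s‖² ≤ 2 ‖s² + t²‖` in `ℚ₂` (because `1 + r²` is never divisible by `4` in
`ℤ₂`). So either `z` or `z⁻¹` is integral, and rescaling by `z⁻¹` if necessary gives a solution
with `x, z` integral and one of them equal to `1`; then `ω w²` is integral, hence so is `w`.
Reducing modulo `8`, where `p + q ≡ 4` and `pq ≡ 3`, a finite check leaves no solution.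
-/

open QuadraticAlgebra

namespace QuadraticAlgebra

section map

variable {R S : Type*} [CommRing R] [CommRing S] {a b : R} {a' b' : S}

def map (f : R →+* S) (ha : f a = a') (hb : f b = b') :
    QuadraticAlgebra R a b →+* QuadraticAlgebra S a' b' where
  toFun z := ⟨f z.re, f z.im⟩
  map_one' := by ext <;> simp
  map_mul' z w := by ext <;> simp [← ha, ← hb]
  map_zero' := by ext <;> simp
  map_add' z w := by ext <;> simp

variable (f : R →+* S) (ha : f a = a') (hb : f b = b')

@[simp]
theorem re_map (z : QuadraticAlgebra R a b) : (map f ha hb z).re = f z.re := rfl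

@[simp]
theorem im_map (z : QuadraticAlgebra R a b) : (map f ha hb z).im = f z.im := rfl

@[simp]
theorem map_omega : map f ha hb ω = ω := by
  ext <;> simp

theorem norm_map (z : QuadraticAlgebra R a b) : (map f ha hb z).norm = f z.norm := by
  simp [norm_def, ← ha, ← hb]

theorem map_injective (hf : Function.Injective f) : Function.Injective (map f ha hb) :=
  fun z w h ↦ by
    ext
    · exact hf (congrArg re h)
    · exact hf (congrArg im h)

end map

instance {R : Type*} [Fintype R] {a b : R} : Fintype (QuadraticAlgebra R a b) :=
  Fintype.ofEquiv _ (equivProd a b).symm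

theorem norm_eq_re_sq_add_im_sq {R : Type*} [CommRing R] (z : QuadraticAlgebra R (-1) 0) :
    z.norm = z.re ^ 2 + z.im ^ 2 := by
  simp only [norm_def, zero_mul, add_zero, neg_mul, one_mul, sub_neg_eq_add]
  ring

theorem exists_algEquiv_of_finrank_eq_two {K L : Type*} [Field K] [Ring L] [Nontrivial L]
    [Algebra K L] {a b : K} [Fact (∀ r, r ^ 2 ≠ a + b * r)] (hL : Module.finrank K L = 2)
    {u : L} (hu : u * u = a • 1 + b • u) :
    ∃ e : QuadraticAlgebra K a b ≃ₐ[K] L, e ω = u := by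
  set f := lift ⟨u, hu⟩
  have : FiniteDimensional K L := Module.finite_of_finrank_eq_succ hL
  have hinj : Function.Injective f := f.toRingHom.injective
  have hsurj : Function.Surjective f :=
    (LinearMap.injective_iff_surjective_of_finrank_eq_finrank (f := f.toLinearMap)
      (by rw [finrank_eq_two, hL])).mp hinj
  refine ⟨AlgEquiv.ofBijective f ⟨hinj, hsurj⟩, ?_⟩
  change f ω = u
  simp [f]

end QuadraticAlgebra

section quartic

variable {A B : Type*} [CommRing A] [CommRing B]

/-- With `x = 1`, `s = p + q`, `t = pq` this is the equation of the statement. -/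
def quartic (i s t x z w : A) : A :=
  -i * w ^ 2 - x ^ 4 - s * i * x ^ 2 * z ^ 2 + t * z ^ 4

theorem map_quartic {F : Type*} [FunLike F A B] [RingHomClass F A B] (φ : F)
    (i s t x z w : A) :
    φ (quartic i s t x z w) = quartic (φ i) (φ s) (φ t) (φ x) (φ z) (φ w) := by
  simp [quartic]

theorem quartic_mul (i s t x z w c : A) :
    quartic i s t (c * x) (c * z) (c ^ 2 * w) = c ^ 4 * quartic i s t x z w := by
  unfold quartic
  ring

end quartic

theorem PadicInt.half_le_norm_one_add_sq (r : ℤ_[2]) : 2⁻¹ ≤ ‖1 + r ^ 2‖ := by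
  by_contra! h
  have h4 : ‖1 + r ^ 2‖ ≤ ((2 : ℕ) : ℝ) ^ (-(2 : ℕ) : ℤ) :=
    (PadicInt.norm_lt_pow_iff_norm_le_pow_sub_one _ (-1)).mp (by simpa using h)
  rw [PadicInt.norm_le_pow_iff_mem_span_pow, ← PadicInt.ker_toZModPow, RingHom.mem_ker,
    map_add, map_one, map_pow] at h4
  exact (by decide : ∀ u : ZMod (2 ^ 2), 1 + u ^ 2 ≠ 0) _ h4

theorem Padic.norm_sq_le_two_mul_norm_sq_add_sq_of_le {s t : ℚ_[2]} (h : ‖t‖ ≤ ‖s‖) :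
    ‖s‖ ^ 2 ≤ 2 * ‖s ^ 2 + t ^ 2‖ := by
  rcases eq_or_ne s 0 with rfl | hs
  · simp
  have hr : ‖t / s‖ ≤ 1 := by
    rw [norm_div]
    exact div_le_one_of_le₀ h (norm_nonneg _)
  have key : 2⁻¹ ≤ ‖1 + (t / s) ^ 2‖ := PadicInt.half_le_norm_one_add_sq ⟨t / s, hr⟩
  have hst : s ^ 2 + t ^ 2 = s ^ 2 * (1 + (t / s) ^ 2) := by field_simp
  rw [hst, norm_mul, norm_pow]
  nlinarith [sq_nonneg ‖s‖]

theorem Padic.norm_sq_le_two_mul_norm_sq_add_sq (s t : ℚ_[2]) :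
    ‖s‖ ^ 2 ≤ 2 * ‖s ^ 2 + t ^ 2‖ := by
  rcases le_total ‖t‖ ‖s‖ with h | h
  · exact norm_sq_le_two_mul_norm_sq_add_sq_of_le h
  · calc ‖s‖ ^ 2 ≤ ‖t‖ ^ 2 := by gcongr
      _ ≤ 2 * ‖t ^ 2 + s ^ 2‖ := norm_sq_le_two_mul_norm_sq_add_sq_of_le h
      _ = 2 * ‖s ^ 2 + t ^ 2‖ := by rw [add_comm]

theorem Padic.sq_ne_neg_one (r : ℚ_[2]) : r ^ 2 ≠ -1 := fun h ↦ by
  have := norm_sq_le_two_mul_norm_sq_add_sq 1 r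
  norm_num [h] at this

theorem Padic.norm_le_one_of_norm_sq_le_two {x : ℚ_[2]} (h : ‖x‖ ^ 2 ≤ 2) : ‖x‖ ≤ 1 := by
  have := norm_le_pow_iff_norm_lt_pow_add_one x 0
  norm_num at this
  rw [this]
  nlinarith [norm_nonneg x]

instance : Fact (∀ r : ℚ_[2], r ^ 2 ≠ -1 + 0 * r) :=
  ⟨fun r ↦ by simpa using Padic.sq_ne_neg_one r⟩

local notation "ℤ₂[i]" => QuadraticAlgebra ℤ_[2] (-1) 0
local notation "ℚ₂[i]" => QuadraticAlgebra ℚ_[2] (-1) 0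

noncomputable abbrev gaussianCoe : ℤ₂[i] →+* ℚ₂[i] :=
  map PadicInt.Coe.ringHom (by simp) (map_zero _)

noncomputable abbrev gaussianMod8 : ℤ₂[i] →+* QuadraticAlgebra (ZMod 8) (-1) 0 :=
  map (PadicInt.toZModPow 3) (by simp) (map_zero _)

theorem norm_le_one_iff_mem_range {z : ℚ₂[i]} : ‖z.norm‖ ≤ 1 ↔ z ∈ gaussianCoe.range := by
  constructor
  · intro h
    rw [norm_eq_re_sq_add_im_sq] at h
    have hre := Padic.norm_sq_le_two_mul_norm_sq_add_sq z.re z.im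
    have him := Padic.norm_sq_le_two_mul_norm_sq_add_sq z.im z.re
    rw [add_comm] at him
    exact ⟨⟨⟨z.re, Padic.norm_le_one_of_norm_sq_le_two (by linarith)⟩,
      ⟨z.im, Padic.norm_le_one_of_norm_sq_le_two (by linarith)⟩⟩, rfl⟩
  · rintro ⟨z, rfl⟩
    rw [QuadraticAlgebra.norm_map]
    exact PadicInt.norm_le_one _

theorem mem_range_or_inv_mem_range (z : ℚ₂[i]) :
    z ∈ gaussianCoe.range ∨ z⁻¹ ∈ gaussianCoe.range := by
  simp only [← norm_le_one_iff_mem_range]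
  refine (le_or_gt ‖z.norm‖ 1).imp id fun h ↦ ?_
  have hz : z ≠ 0 := by
    rintro rfl
    norm_num at h
  have hinv : ‖z⁻¹.norm‖ * ‖z.norm‖ = 1 := by
    rw [← norm_mul, ← map_mul, inv_mul_cancel₀ hz, map_one, NormOneClass.norm_one]
  nlinarith [norm_nonneg z⁻¹.norm]

theorem mem_range_of_sq_mem_range {w : ℚ₂[i]} (h : w ^ 2 ∈ gaussianCoe.range) :
    w ∈ gaussianCoe.range := by
  rw [← norm_le_one_iff_mem_range] at h ⊢
  rw [map_pow, norm_pow] at h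
  exact (pow_le_one_iff_of_nonneg (norm_nonneg _) two_ne_zero).mp h

theorem mem_range_of_quartic_eq_zero {s t x z w : ℚ₂[i]} (hs : s ∈ gaussianCoe.range)
    (ht : t ∈ gaussianCoe.range) (hx : x ∈ gaussianCoe.range) (hz : z ∈ gaussianCoe.range)
    (h : quartic ω s t x z w = 0) : w ∈ gaussianCoe.range := by
  have hω : (ω : ℚ₂[i]) * ω = -1 := by ext <;> simp
  have hω_mem : (ω : ℚ₂[i]) ∈ gaussianCoe.range := ⟨ω, map_omega ..⟩
  have hw : w ^ 2 = ω * (x ^ 4 + s * ω * x ^ 2 * z ^ 2 - t * z ^ 4) := by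
    unfold quartic at h
    linear_combination ω * h + w ^ 2 * hω
  apply mem_range_of_sq_mem_range
  rw [hw]
  exact mul_mem hω_mem (sub_mem (add_mem (pow_mem hx 4) (mul_mem (mul_mem (mul_mem hs hω_mem)
    (pow_mem hx 2)) (pow_mem hz 2))) (mul_mem ht (pow_mem hz 4)))

set_option maxRecDepth 100000 in
theorem quartic_ne_zero_mod_eight :
    ∀ z w : QuadraticAlgebra (ZMod 8) (-1) 0,
      quartic ω 4 3 1 z w ≠ 0 ∧ quartic ω 4 3 z 1 w ≠ 0 := by
  unfold quartic
  decide

theorem quartic_padicInt_ne_zero {n m : ℕ} (hn : (n : ZMod 8) = 4) (hm : (m : ZMod 8) = 3)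
    {x z w : ℤ₂[i]} (hxz : x = 1 ∨ z = 1) : quartic ω n m x z w ≠ 0 := by
  have hn' : (n : QuadraticAlgebra (ZMod 8) (-1) 0) = 4 := by rw [← C_natCast, hn]; rfl
  have hm' : (m : QuadraticAlgebra (ZMod 8) (-1) 0) = 3 := by rw [← C_natCast, hm]; rfl
  intro h
  have h8 := congrArg gaussianMod8 h
  rw [map_quartic, map_omega, map_natCast, map_natCast, hn', hm', map_zero] at h8
  rcases hxz with rfl | rfl
  · exact (quartic_ne_zero_mod_eight _ _).1 (by rwa [map_one] at h8)
  · exact (quartic_ne_zero_mod_eight _ _).2 (by rwa [map_one] at h8)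

theorem quartic_ne_zero_of_mem_range {n m : ℕ} (hn : (n : ZMod 8) = 4) (hm : (m : ZMod 8) = 3)
    {x z w : ℚ₂[i]} (hx : x ∈ gaussianCoe.range) (hz : z ∈ gaussianCoe.range)
    (hxz : x = 1 ∨ z = 1) : quartic ω n m x z w ≠ 0 := by
  intro h
  obtain ⟨w, rfl⟩ := mem_range_of_quartic_eq_zero (natCast_mem _ n) (natCast_mem _ m) hx hz h
  obtain ⟨x, rfl⟩ := hx
  obtain ⟨z, rfl⟩ := hz
  have hinj : Function.Injective gaussianCoe := map_injective _ _ _ Subtype.coe_injective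
  refine quartic_padicInt_ne_zero hn hm (x := x) (z := z) (w := w) ?_ (hinj ?_)
  · simpa only [← map_one gaussianCoe, hinj.eq_iff] using hxz
  · rw [map_quartic, map_zero, map_natCast, map_natCast, map_omega]
    exact h

theorem quartic_one_ne_zero {n m : ℕ} (hn : (n : ZMod 8) = 4) (hm : (m : ZMod 8) = 3)
    (z w : ℚ₂[i]) : quartic ω n m 1 z w ≠ 0 := by
  by_cases hz : z ∈ gaussianCoe.range
  · exact quartic_ne_zero_of_mem_range hn hm (one_mem _) hz (.inl rfl)
  have hz0 : z ≠ 0 := by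
    rintro rfl
    exact hz (zero_mem _)
  intro h
  refine quartic_ne_zero_of_mem_range hn hm ((mem_range_or_inv_mem_range z).resolve_left hz)
    (one_mem _) (.inr rfl) (w := z⁻¹ ^ 2 * w) ?_
  have := quartic_mul ω (n : ℚ₂[i]) m 1 z w z⁻¹
  rwa [mul_one, inv_mul_cancel₀ hz0, h, mul_zero] at this

theorem natCast_add_eq_four_and_natCast_mul_eq_three {p q : ℕ} (hpq : q = p + 2)
    (hp1 : p % 4 = 1) : ((p + q : ℕ) : ZMod 8) = 4 ∧ ((p * q : ℕ) : ZMod 8) = 3 := by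
  have hmul : p * q % 8 = 3 % 8 := by
    obtain ⟨hp8, hq8⟩ | ⟨hp8, hq8⟩ : p % 8 = 1 ∧ q % 8 = 3 ∨ p % 8 = 5 ∧ q % 8 = 7 := by omega
    all_goals rw [Nat.mul_mod, hp8, hq8]
  exact ⟨mod_cast (ZMod.natCast_eq_natCast_iff' (p + q) 4 8).mpr (by omega),
    mod_cast (ZMod.natCast_eq_natCast_iff' (p * q) 3 8).mpr hmul⟩

theorem stmt_14_general (p q : ℕ) (hpq : q = p + 2)
    (hp1 : p % 4 = 1)
    (L : Type*) [Field L] [Algebra ℚ_[2] L] (hdim : Module.finrank ℚ_[2] L = 2)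
    (α : L) (hα : α ^ 2 = -1) :
    ¬ ∃ z w : L,
        -α * w ^ 2 - 1 - ((p : L) + (q : L)) * α * z ^ 2 + (p : L) * (q : L) * z ^ 4 = 0 := by
  rintro ⟨z, w, h⟩
  obtain ⟨e, he⟩ := exists_algEquiv_of_finrank_eq_two (a := -1) (b := 0) hdim (u := α)
    (by rw [← sq, hα]; simp)
  obtain ⟨hn, hm⟩ := natCast_add_eq_four_and_natCast_mul_eq_three hpq hp1
  apply quartic_one_ne_zero hn hm (e.symm z) (e.symm w)
  apply e.injective
  rw [map_quartic, map_zero, map_natCast, map_natCast, map_one, he, e.apply_symm_apply,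
    e.apply_symm_apply]
  unfold quartic
  push_cast
  linear_combination h

/-- Let `p` and `q` be primes with `q = p + 2` and `p ≡ 1 (mod 4)`. Let `L` be a field
which is a `ℚ₂`-algebra of dimension 2 over `ℚ₂`, and `α ∈ L` with `α² = -1`. Then there
are no `z, w ∈ L` with `-α·w² - 1 - (p+q)·α·z² + pq·z⁴ = 0`. -/
theorem stmt_14 (p q : ℕ) (hp : p.Prime) (hq : q.Prime) (hpq : q = p + 2)
    (hp1 : p % 4 = 1)
    (L : Type*) [Field L] [Algebra ℚ_[2] L] (hdim : Module.finrank ℚ_[2] L = 2)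
    (α : L) (hα : α ^ 2 = -1) :
    ¬ ∃ z w : L,
        -α * w ^ 2 - 1 - ((p : L) + (q : L)) * α * z ^ 2 + (p : L) * (q : L) * z ^ 4 = 0 :=
  stmt_14_general p q hpq hp1 L hdim α hα
end
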